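/- arXiv:math/0508523 — 3 statements merged into one kernel-verified Lean document; each statement's English description precedes it below -/
import Mathlib

section
/- For an n×n matrix X of commuting variables, let D^(α)(i_1,...,i_n) denote the α-determinant of the matrix whose k-th row is the i_k-th row of X. Then the differential operator E_{pq} = ∑_{j=1}^n x_{pj} ∂/∂x_{qj} acts by E_{pq} · D^(α)(i_1,...,i_n) = ∑_{k=1}^n δ_{i_k,q} D^(α)(i_1,...,i_{k-1}, p, i_{k+1},...,i_n). -/
open Finset MvPolynomial

/-- number of cycles of a permutation (including fixed points) -/
def cyc {n : ℕ} (σ : Equiv.Perm (Fin n)) : ℕ :=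
  σ.cycleType.card + (Finset.univ.filter fun x => σ x = x).card

/-- α-determinant row polynomial D^(α)(i₁,...,iₙ) -/
noncomputable def D (n : ℕ) (α : ℂ) (i : Fin n → Fin n) :
    MvPolynomial (Fin n × Fin n) ℂ :=
  ∑ σ : Equiv.Perm (Fin n), (C α) ^ (n - cyc σ) * ∏ k, X (i k, σ k)

/-- content polynomial of a Young diagram -/
noncomputable def contentPoly (μ : YoungDiagram) (α : ℂ) : ℂ :=
  ∏ c ∈ μ.cells, (1 + (((c.2 : ℤ) - (c.1 : ℤ)) : ℂ) * α)

/-- p preserves each row of the numbering e -/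
abbrev IsRowPerm {n : ℕ} (μ : YoungDiagram) (e : Fin n ≃ {c // c ∈ μ.cells})
    (p : Equiv.Perm (Fin n)) : Prop :=
  ∀ k, (e (p k)).1.1 = (e k).1.1

/-- q preserves each column of the numbering e -/
abbrev IsColPerm {n : ℕ} (μ : YoungDiagram) (e : Fin n ≃ {c // c ∈ μ.cells})
    (q : Equiv.Perm (Fin n)) : Prop :=
  ∀ k, (e (q k)).1.2 = (e k).1.2

/-- the numbering e is a standard tableau -/
abbrev IsStandard {n : ℕ} (μ : YoungDiagram) (e : Fin n ≃ {c // c ∈ μ.cells}) : Prop :=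
  ∀ k l : Fin n, (e k).1.1 ≤ (e l).1.1 → (e k).1.2 ≤ (e l).1.2 → k ≠ l → k < l

lemma pderiv_prod_X {σ : Type*} [DecidableEq σ] {ι : Type*} [DecidableEq ι]
    (j : σ) (s : Finset ι) (v : ι → σ) :
    pderiv j (∏ k ∈ s, X (v k) : MvPolynomial σ ℂ) =
      ∑ k ∈ s, if v k = j then ∏ l ∈ s.erase k, X (v l) else 0 := by
  induction s using Finset.induction_on with
  | empty => simp
  | @insert a s ha ih =>
    rw [Finset.prod_insert ha, pderiv_mul, ih, Finset.sum_insert ha,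
      Finset.erase_insert ha]
    have h2 : ∀ k ∈ s, (if v k = j then ∏ l ∈ (insert a s).erase k, X (v l) else 0)
        = X (v a) * (if v k = j then (∏ l ∈ s.erase k, X (v l) : MvPolynomial σ ℂ) else 0) := by
      intro k hk
      have : (insert a s).erase k = insert a (s.erase k) := by
        rw [Finset.erase_insert_of_ne (by rintro rfl; exact ha hk)]
      rw [this, Finset.prod_insert (by simp [ha])]
      split <;> simp
    rw [Finset.sum_congr rfl h2, ← Finset.mul_sum, Finset.mul_sum]
    congr 1
    by_cases h : v a = j
    · rw [h, pderiv_X_self, if_pos rfl, one_mul]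
    · rw [pderiv_X_of_ne h, if_neg h, zero_mul]

/-- Action of E_{pq} = ∑_j x_{pj} ∂_{qj} on the α-determinants D^(α). -/
theorem Epq_action_on_D {n : ℕ} (α : ℂ) (i : Fin n → Fin n) (p q : Fin n) :
    ∑ j : Fin n, X (p, j) * MvPolynomial.pderiv (q, j) (D n α i) =
      ∑ k : Fin n, if i k = q then D n α (Function.update i k p) else 0 := by
  classical
  simp only [D, map_sum]
  have h1 : ∀ (j : Fin n) (σ : Equiv.Perm (Fin n)),
      pderiv (q, j) ((C α : MvPolynomial (Fin n × Fin n) ℂ) ^ (n - cyc σ) * ∏ k, X (i k, σ k))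
        = (C α) ^ (n - cyc σ) *
            ∑ k, if (i k, σ k) = (q, j) then ∏ l ∈ Finset.univ.erase k, X (i l, σ l) else 0 := by
    intro j σ
    rw [← C_pow, pderiv_C_mul, pderiv_prod_X (ι := Fin n) (q, j) Finset.univ
      (fun k => (i k, σ k)), C_pow]
  simp only [h1, Finset.mul_sum]
  rw [Finset.sum_comm]
  have hr : ∀ k : Fin n,
      (if i k = q then ∑ σ : Equiv.Perm (Fin n),
          (C α : MvPolynomial (Fin n × Fin n) ℂ) ^ (n - cyc σ) *
            ∏ l, X (Function.update i k p l, σ l) else 0)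
        = ∑ σ : Equiv.Perm (Fin n), if i k = q then
            (C α) ^ (n - cyc σ) * ∏ l, X (Function.update i k p l, σ l) else 0 := by
    intro k; split <;> simp
  simp only [hr]
  rw [Finset.sum_comm (s := (Finset.univ : Finset (Fin n)))
    (t := (Finset.univ : Finset (Equiv.Perm (Fin n))))]
  refine Finset.sum_congr rfl fun σ _ => ?_
  rw [Finset.sum_comm]
  refine Finset.sum_congr rfl fun k _ => ?_
  by_cases h : i k = q
  · simp only [h, Prod.mk.injEq, true_and, if_pos, mul_ite, mul_zero]
    rw [Finset.sum_ite_eq Finset.univ (σ k)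
      (fun j => X (p, j) * ((C α : MvPolynomial (Fin n × Fin n) ℂ) ^ (n - cyc σ)
        * ∏ l ∈ Finset.univ.erase k, X (i l, σ l))), if_pos (Finset.mem_univ _)]
    rw [← Finset.mul_prod_erase Finset.univ (fun l => X (Function.update i k p l, σ l))
      (Finset.mem_univ k), Function.update_self]
    have : ∏ l ∈ Finset.univ.erase k, (X (Function.update i k p l, σ l) :
        MvPolynomial (Fin n × Fin n) ℂ) = ∏ l ∈ Finset.univ.erase k, X (i l, σ l) := by
      refine Finset.prod_congr rfl fun l hl => ?_
      rw [Function.update_of_ne (Finset.ne_of_mem_erase hl)]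
    rw [this]; ring
  · simp [h, Prod.mk.injEq]
end

section
/- For a numbering T of shape λ ⊢ n, the polynomial ∑_{q ∈ C(T)} sgn(q) ∑_{p ∈ R(T)} x_{qp(1),1} x_{qp(2),2} ⋯ x_{qp(n),n} in the commuting variables x_{ij} is nonzero. -/
open Finset MvPolynomial

/-- a permutation that preserves both rows and columns is the identity -/
lemma row_and_col_eq_one {n : ℕ} (μ : YoungDiagram) (e : Fin n ≃ {c // c ∈ μ.cells})
    (p : Equiv.Perm (Fin n)) (hr : IsRowPerm μ e p) (hc : IsColPerm μ e p) : p = 1 := by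
  refine Equiv.Perm.ext fun k => ?_
  have h : e (p k) = e k := Subtype.ext (Prod.ext (hr k) (hc k))
  simpa using e.injective h

/-- the exponent vector of ∏ X (σ k, k) -/
noncomputable def dvec {n : ℕ} (σ : Equiv.Perm (Fin n)) : (Fin n × Fin n) →₀ ℕ :=
  ∑ k, Finsupp.single (σ k, k) 1

lemma prod_X_eq {n : ℕ} (σ : Equiv.Perm (Fin n)) :
    (∏ k : Fin n, X (σ k, k) : MvPolynomial (Fin n × Fin n) ℂ) = monomial (dvec σ) 1 := by
  rw [dvec, monomial_sum_one]
  rfl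

lemma dvec_inj {n : ℕ} (σ τ : Equiv.Perm (Fin n)) (h : dvec σ = dvec τ) : σ = τ := by
  refine Equiv.Perm.ext fun j => ?_
  have := DFunLike.congr_fun h (τ j, j)
  simp only [dvec, Finsupp.finset_sum_apply, Finsupp.single_apply] at this
  by_contra hne
  have hL : ∀ k : Fin n, ((σ k, k) = ((τ j : Fin n), j) → (1:ℕ) = 0 → False) := by
    intro k; intro h1 h2; exact one_ne_zero h2
  have hR : (∑ k : Fin n, if ((τ:Fin n → Fin n) k, k) = (τ j, j) then (1:ℕ) else 0) = 1 := by
    rw [Finset.sum_eq_single j]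
    · simp
    · intro b _ hb
      simp only [Prod.mk.injEq, ite_eq_right_iff, and_imp]
      intro _ h2; exact absurd h2 hb
    · simp
  rw [hR] at this
  -- LHS must be 0 since σ j ≠ τ j
  have hL0 : (∑ k : Fin n, if ((σ:Fin n → Fin n) k, k) = (τ j, j) then (1:ℕ) else 0) = 0 := by
    apply Finset.sum_eq_zero
    intro k _
    simp only [Prod.mk.injEq, ite_eq_right_iff, and_imp]
    intro h1 h2
    subst h2
    exact absurd h1 hne
  rw [hL0] at this
  exact one_ne_zero this.symm

/-- The Young-symmetrized monomial sum is a nonzero polynomial. -/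
theorem symmetrized_monomial_ne_zero {n : ℕ} (μ : YoungDiagram)
    (hμ : μ.cells.card = n) (e : Fin n ≃ {c // c ∈ μ.cells}) :
    (∑ q ∈ Finset.univ.filter (IsColPerm μ e),
        ∑ p ∈ Finset.univ.filter (IsRowPerm μ e),
          ((Equiv.Perm.sign q : ℤ) : ℂ) • ∏ k : Fin n, X ((q * p) k, k)) ≠
      (0 : MvPolynomial (Fin n × Fin n) ℂ) := by
  intro h
  have hcoeff := congrArg (coeff (dvec (1 : Equiv.Perm (Fin n)))) h
  rw [coeff_zero] at hcoeff
  rw [coeff_sum] at hcoeff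
  simp only [coeff_sum, coeff_smul, prod_X_eq, coeff_monomial] at hcoeff
  have key : ∀ q ∈ Finset.univ.filter (IsColPerm μ e),
      (∑ p ∈ Finset.univ.filter (IsRowPerm μ e),
        ((Equiv.Perm.sign q : ℤ) : ℂ) • (if dvec (q * p) = dvec 1 then (1:ℂ) else 0)) =
      if q = 1 then 1 else 0 := by
    intro q hq
    rw [Finset.mem_filter] at hq
    by_cases hq1 : q = 1
    · subst hq1
      rw [Finset.sum_eq_single 1]
      · simp
      · intro p hp hp1
        rw [Finset.mem_filter] at hp
        have hne : ¬ dvec p = dvec 1 := fun hd => hp1 (dvec_inj _ _ hd)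
        simp [hne]
      · intro h1
        exfalso
        apply h1
        rw [Finset.mem_filter]
        exact ⟨Finset.mem_univ _, fun k => rfl⟩
    · rw [if_neg hq1]
      apply Finset.sum_eq_zero
      intro p hp
      rw [Finset.mem_filter] at hp
      have : ¬ dvec (q * p) = dvec 1 := by
        intro hd
        have hqp : q * p = 1 := dvec_inj _ _ hd
        have hqinv : q = p⁻¹ := by
          rw [eq_inv_iff_mul_eq_one]; exact hqp
        -- p is a row perm; q = p⁻¹ is a col perm, so p is also a col perm
        have hpc : IsColPerm μ e p := by
          intro k
          have := hq.2 (p k)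
          rw [hqinv] at this
          simpa using this.symm
        have hp1 : p = 1 := row_and_col_eq_one μ e p hp.2 hpc
        rw [hp1] at hqinv
        exact hq1 (by simpa using hqinv)
      simp [this]
  rw [Finset.sum_congr rfl key] at hcoeff
  rw [Finset.sum_ite_eq' _ (1 : Equiv.Perm (Fin n)) (fun _ => (1:ℂ))] at hcoeff
  rw [if_pos (by rw [Finset.mem_filter]; exact ⟨Finset.mem_univ _, fun k => rfl⟩)] at hcoeff
  exact one_ne_zero hcoeff
end

section
/- For the column tableau T of shape (1^n) (single column with entries 1,...,n from top), ∑_{q ∈ S_n} sgn(q) D^(α)(q(1),...,q(n)) = ∏_{j=1}^{n−1}(1 − jα) · det(X). -/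
open Finset MvPolynomial

section Aux
open Equiv Equiv.Perm


variable {n m : ℕ}

-- invariance of f under powers
lemma f_inv_zpow {σ : Perm (Fin n)} {f : Fin n → Fin m} (hf : f ∘ σ = f) :
    ∀ (i : ℤ) (x : Fin n), f ((σ ^ i) x) = f x := by
  have hnat : ∀ (k : ℕ) (x : Fin n), f ((σ ^ k) x) = f x := by
    intro k
    induction k with
    | zero => intro x; simp
    | succ k ih =>
      intro x
      rw [pow_succ, Equiv.Perm.mul_apply, ih, ← Function.comp_apply (f := f), hf]
  intro i x
  cases i with
  | ofNat k => exact hnat k x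
  | negSucc k =>
    rw [zpow_negSucc]
    have := hnat (k+1) ((σ ^ (k+1))⁻¹ x)
    rw [← Equiv.Perm.mul_apply, mul_inv_cancel, Equiv.Perm.one_apply] at this; exact this.symm


lemma factor_support_nonempty {σ : Perm (Fin n)} (c : {c // c ∈ σ.cycleFactorsFinset}) :
    (c.1).support.Nonempty := by
  have hc := (mem_cycleFactorsFinset_iff.1 c.2).1
  exact Finset.nonempty_of_ne_empty fun hemp => hc.ne_one (Equiv.Perm.support_eq_empty_iff.1 hemp)

noncomputable def fixedFnEquiv (σ : Perm (Fin n)) :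
    {f : Fin n → Fin m // f ∘ σ = f} ≃
      (({c // c ∈ σ.cycleFactorsFinset} → Fin m) × ({x : Fin n // σ x = x} → Fin m)) where
  toFun f :=
    ⟨fun c => f.1 (c.1.support.min' (factor_support_nonempty c)),
      fun x => f.1 x.1⟩
  invFun gh := ⟨fun x =>
      if hx : σ x = x then gh.2 ⟨x, hx⟩
      else gh.1 ⟨σ.cycleOf x, cycleOf_mem_cycleFactorsFinset_iff.2 (mem_support.2 hx)⟩, by
    funext x
    by_cases hx : σ x = x
    · simp only [Function.comp_apply, hx]
    · have hsx : σ (σ x) ≠ σ x := fun h => hx (σ.injective h)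
      simp only [Function.comp_apply, dif_neg hx, dif_neg hsx, cycleOf_self_apply]⟩
  left_inv := by
    rintro ⟨f, hf⟩
    ext x
    by_cases hx : σ x = x
    · simp [hx]
    · simp only [dif_neg hx]
      set p := (σ.cycleOf x).support.min' _ with hp
      have hpmem : p ∈ (σ.cycleOf x).support := Finset.min'_mem _ _
      have hsc : σ.SameCycle x p := (mem_support_cycleOf_iff.1 hpmem).1
      obtain ⟨i, hi⟩ := hsc
      rw [← hi, f_inv_zpow hf]
  right_inv := by
    rintro ⟨g, h⟩
    refine Prod.ext ?_ ?_
    · funext c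
      have hcyc := (mem_cycleFactorsFinset_iff.1 c.2).1
      set p := c.1.support.min' (factor_support_nonempty c) with hp
      have hpmem : p ∈ c.1.support := Finset.min'_mem _ _
      have hcp : c.1 p = σ p := (mem_cycleFactorsFinset_iff.1 c.2).2 p hpmem
      have hppne : σ p ≠ p := by
        rw [← hcp]; exact mem_support.1 hpmem
      simp only [← hp, dif_neg hppne]
      congr 1
      exact Subtype.ext (cycle_is_cycleOf hpmem c.2).symm
    · funext x
      simp [x.2]

lemma cycleType_card (σ : Perm (Fin n)) : σ.cycleType.card = σ.cycleFactorsFinset.card := by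
  unfold Equiv.Perm.cycleType
  rw [Multiset.card_map]
  rfl

lemma card_fixedFn (σ : Perm (Fin n)) :
    (univ.filter fun f : Fin n → Fin m => f ∘ σ = f).card = m ^ cyc σ := by
  rw [← Fintype.card_subtype]
  rw [Fintype.card_congr (fixedFnEquiv σ)]
  rw [Fintype.card_prod, Fintype.card_fun, Fintype.card_fun, Fintype.card_coe,
    Fintype.card_subtype, Fintype.card_fin, cyc, cycleType_card, pow_add]

lemma sum_sign_stab (f : Fin n → Fin m) :
    ∑ σ ∈ univ.filter (fun σ : Perm (Fin n) => f ∘ σ = f), ((sign σ : ℤ) : ℂ) =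
      if Function.Injective f then 1 else 0 := by
  by_cases hf : Function.Injective f
  · rw [if_pos hf]
    have : univ.filter (fun σ : Perm (Fin n) => f ∘ σ = f) = {1} := by
      ext σ
      simp only [Finset.mem_filter, Finset.mem_univ, true_and, Finset.mem_singleton]
      constructor
      · intro h
        exact Equiv.ext fun x => hf (congrFun h x)
      · rintro rfl; rfl
    simp [this]
  · rw [if_neg hf]
    rw [Function.Injective] at hf
    push_neg at hf
    obtain ⟨a, b, hab, hne⟩ := hf
    refine Finset.sum_involution (fun σ _ => Equiv.swap a b * σ) ?_ ?_ ?_ ?_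
    · intro σ _
      rw [Equiv.Perm.sign_mul, Equiv.Perm.sign_swap hne]
      push_cast
      ring
    · intro σ _ _
      intro h
      replace h : Equiv.swap a b * σ = σ := h
      have h1 : Equiv.swap a b * σ = 1 * σ := by rw [h, one_mul]
      exact hne (Equiv.swap_eq_one_iff.1 (mul_right_cancel h1))
    · intro σ hσ
      simp only [Finset.mem_filter, Finset.mem_univ, true_and] at hσ ⊢
      funext x
      simp only [Function.comp_apply, Equiv.Perm.mul_apply]
      rcases Equiv.swap_apply_def a b (σ x) with _
      by_cases h1 : σ x = a
      · rw [h1, Equiv.swap_apply_left, ← hab, ← h1]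
        exact congrFun hσ x
      · by_cases h2 : σ x = b
        · rw [h2, Equiv.swap_apply_right, hab, ← h2]
          exact congrFun hσ x
        · rw [Equiv.swap_apply_of_ne_of_ne h1 h2]
          exact congrFun hσ x
    · intro σ _
      show Equiv.swap a b * (Equiv.swap a b * σ) = σ
      rw [← mul_assoc, Equiv.swap_mul_self, one_mul]

lemma cyc_le (σ : Perm (Fin n)) : cyc σ ≤ n := by
  have h1 : σ.cycleType.card ≤ σ.cycleType.sum := by
    have := Multiset.card_nsmul_le_sum (s := σ.cycleType) (a := 1)
      (fun x hx => le_trans (by norm_num) (Equiv.Perm.two_le_of_mem_cycleType hx))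
    simpa using this
  have h2 : σ.cycleType.sum = σ.support.card := Equiv.Perm.sum_cycleType σ
  have h3 : (Finset.univ.filter fun x => σ x = x).card + σ.support.card = n := by
    have := Finset.card_filter_add_card_filter_not (s := (univ : Finset (Fin n)))
      (p := fun x => σ x = x)
    simpa [Equiv.Perm.support, Fintype.card_fin] using this
  calc cyc σ = σ.cycleType.card + (Finset.univ.filter fun x => σ x = x).card := rfl
    _ ≤ σ.support.card + (Finset.univ.filter fun x => σ x = x).card := by
        exact Nat.add_le_add_right (h2 ▸ h1) _
    _ = n := by omega

lemma sum_sign_pow_cyc (hm : n ≤ m) :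
    ∑ σ : Perm (Fin n), ((sign σ : ℤ) : ℂ) * (m : ℂ) ^ cyc σ =
      ∏ j ∈ range n, ((m : ℂ) - j) := by
  have key : ∀ σ : Perm (Fin n), ((m : ℂ)) ^ cyc σ =
      ∑ f ∈ univ.filter (fun f : Fin n → Fin m => f ∘ σ = f), (1 : ℂ) := by
    intro σ
    rw [Finset.sum_const, nsmul_eq_mul, mul_one, card_fixedFn]
    push_cast
    ring
  calc ∑ σ : Perm (Fin n), ((sign σ : ℤ) : ℂ) * (m : ℂ) ^ cyc σ
      = ∑ σ : Perm (Fin n), ∑ f : Fin n → Fin m,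
          if f ∘ σ = f then ((sign σ : ℤ) : ℂ) else 0 := by
        refine Finset.sum_congr rfl fun σ _ => ?_
        rw [key, Finset.mul_sum, Finset.sum_filter]
        simp
    _ = ∑ f : Fin n → Fin m, ∑ σ : Perm (Fin n),
          if f ∘ σ = f then ((sign σ : ℤ) : ℂ) else 0 := Finset.sum_comm
    _ = ∑ f : Fin n → Fin m, if Function.Injective f then (1:ℂ) else 0 := by
        refine Finset.sum_congr rfl fun f _ => ?_
        rw [← Finset.sum_filter, sum_sign_stab]
    _ = ((univ.filter fun f : Fin n → Fin m => Function.Injective f).card : ℂ) := by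
        rw [Finset.card_filter]
        push_cast
        rfl
    _ = ∏ j ∈ range n, ((m : ℂ) - j) := by
        rw [← Fintype.card_subtype,
          Fintype.card_congr (Equiv.subtypeInjectiveEquivEmbedding (Fin n) (Fin m)),
          Fintype.card_embedding_eq, Fintype.card_fin, Fintype.card_fin,
          Nat.descFactorial_eq_prod_range]
        push_cast [Nat.cast_prod]
        refine Finset.prod_congr rfl fun j hj => ?_
        rw [Nat.cast_sub (le_trans (le_of_lt (Finset.mem_range.1 hj)) hm)]

lemma scalar_id (n : ℕ) (α : ℂ) :
    ∑ σ : Perm (Fin n), ((sign σ : ℤ) : ℂ) * α ^ (n - cyc σ) =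
      ∏ j ∈ range n, (1 - (j : ℂ) * α) := by
  set P : Polynomial ℂ := ∑ σ : Perm (Fin n),
    Polynomial.C ((sign σ : ℤ) : ℂ) * Polynomial.X ^ (n - cyc σ) with hP
  set Q : Polynomial ℂ := ∏ j ∈ range n, (1 - Polynomial.C (j : ℂ) * Polynomial.X) with hQ
  have hPeval : ∀ x : ℂ, P.eval x = ∑ σ : Perm (Fin n), ((sign σ : ℤ) : ℂ) * x ^ (n - cyc σ) := by
    intro x; rw [hP, Polynomial.eval_finset_sum]; simp
  have hQeval : ∀ x : ℂ, Q.eval x = ∏ j ∈ range n, (1 - (j : ℂ) * x) := by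
    intro x; rw [hQ, Polynomial.eval_prod]; simp
  have hPQ : P = Q := by
    apply Polynomial.eq_of_infinite_eval_eq
    have hsub : Set.range (fun k : ℕ => (((n + 1 + k : ℕ) : ℂ))⁻¹) ⊆
        {x | P.eval x = Q.eval x} := by
      rintro x ⟨k, rfl⟩
      set m : ℕ := n + 1 + k with hm
      have hm0 : ((m : ℂ)) ≠ 0 := Nat.cast_ne_zero.2 (by omega)
      have hnm : n ≤ m := by omega
      simp only [Set.mem_setOf_eq]
      have hcancel : ((m : ℂ)) ^ n * P.eval ((m : ℂ))⁻¹ = ((m : ℂ)) ^ n * Q.eval ((m : ℂ))⁻¹ := by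
        rw [hPeval, hQeval, Finset.mul_sum]
        have hpow : ∀ k : ℕ, k ≤ n → ((m : ℂ)) ^ n * (((m : ℂ)) ^ k)⁻¹ = (m : ℂ) ^ (n - k) := by
          intro k hk
          rw [← div_eq_mul_inv]
          exact (pow_sub₀ _ hm0 hk).symm
        have h1 : ∀ σ : Perm (Fin n),
            ((m : ℂ)) ^ n * (((sign σ : ℤ) : ℂ) * ((m : ℂ))⁻¹ ^ (n - cyc σ)) =
            ((sign σ : ℤ) : ℂ) * (m : ℂ) ^ cyc σ := by
          intro σ
          have : ((m : ℂ)) ^ n * (((sign σ : ℤ) : ℂ) * ((m : ℂ))⁻¹ ^ (n - cyc σ)) =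
              ((sign σ : ℤ) : ℂ) * (((m : ℂ)) ^ n * (((m : ℂ)) ^ (n - cyc σ))⁻¹) := by
            rw [inv_pow]; ring
          rw [this, hpow _ (Nat.sub_le n (cyc σ)), Nat.sub_sub_self (cyc_le σ)]
        rw [Finset.sum_congr rfl fun σ _ => h1 σ, sum_sign_pow_cyc hnm]
        have hmn : ((m : ℂ)) ^ n = ∏ _j ∈ range n, (m : ℂ) := by
          simp [Finset.prod_const]
        rw [hmn, ← Finset.prod_mul_distrib]
        refine Finset.prod_congr rfl fun j hj => ?_
        field_simp
      exact mul_left_cancel₀ (pow_ne_zero n hm0) hcancel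
    refine Set.Infinite.mono hsub ?_
    apply Set.infinite_range_of_injective
    intro a b hab
    have := inv_injective hab
    have := Nat.cast_injective (R := ℂ) this
    omega
  rw [← hPeval, ← hQeval, hPQ]

lemma range_shift (n : ℕ) (α : ℂ) :
    ∏ j ∈ range n, (1 - (j : ℂ) * α) =
      ∏ j ∈ range (n - 1), (1 - ((j + 1 : ℕ) : ℂ) * α) := by
  cases n with
  | zero => simp
  | succ k =>
    rw [Finset.prod_range_succ']
    push_cast
    simp



/-- Antisymmetrization of the α-determinant over all of S_n:
∑_q sgn(q) D^(α)(q(1),…,q(n)) = ∏_{j=1}^{n-1}(1 − jα) · det X. -/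

theorem antisymmetrized_adet (n : ℕ) (α : ℂ) :
    ∑ q : Equiv.Perm (Fin n), ((Equiv.Perm.sign q : ℤ) : ℂ) • D n α ⇑q =
      C (∏ j ∈ Finset.range (n - 1), (1 - ((j + 1 : ℕ) : ℂ) * α)) *
        (Matrix.of fun i j : Fin n => (X (i, j) : MvPolynomial (Fin n × Fin n) ℂ)).det := by
  classical
  set S : ℂ := ∑ σ : Perm (Fin n), ((sign σ : ℤ) : ℂ) * α ^ (n - cyc σ) with hS
  have hprod : ∀ q σ : Perm (Fin n),
      (∏ k, (X (q k, σ k) : MvPolynomial (Fin n × Fin n) ℂ)) =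
        ∏ k, X (k, (σ * q⁻¹) k) := by
    intro q σ
    rw [← Equiv.prod_comp q (fun k => (X (k, (σ * q⁻¹) k) : MvPolynomial (Fin n × Fin n) ℂ))]
    refine Finset.prod_congr rfl fun k _ => ?_
    simp [Equiv.Perm.mul_apply]
  calc ∑ q : Equiv.Perm (Fin n), ((Equiv.Perm.sign q : ℤ) : ℂ) • D n α ⇑q
      = ∑ q : Perm (Fin n), ∑ τ : Perm (Fin n),
          ((sign q : ℤ) : ℂ) • ((C α) ^ (n - cyc (τ * q)) * ∏ k, X (k, τ k)) := by
        refine Finset.sum_congr rfl fun q _ => ?_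
        rw [D, Finset.smul_sum]
        rw [← Fintype.sum_equiv (Equiv.mulRight q)
          (fun τ => ((sign q : ℤ) : ℂ) • ((C α) ^ (n - cyc (τ * q)) * ∏ k, (X (k, τ k) : MvPolynomial (Fin n × Fin n) ℂ)))
          (fun σ => ((sign q : ℤ) : ℂ) • ((C α) ^ (n - cyc σ) * ∏ k, (X (q k, σ k) : MvPolynomial (Fin n × Fin n) ℂ)))]
        intro τ
        simp only [Equiv.coe_mulRight]
        rw [hprod q (τ * q), mul_inv_cancel_right]
    _ = ∑ τ : Perm (Fin n), ∑ q : Perm (Fin n),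
          ((sign q : ℤ) : ℂ) • ((C α) ^ (n - cyc (τ * q)) * ∏ k, X (k, τ k)) := Finset.sum_comm
    _ = ∑ τ : Perm (Fin n), ((sign τ : ℤ) : ℂ) • (C S * ∏ k, X (k, τ k)) := by
        refine Finset.sum_congr rfl fun τ _ => ?_
        rw [← Fintype.sum_equiv (Equiv.mulLeft τ⁻¹)
          (fun σ => ((sign (τ⁻¹ * σ) : ℤ) : ℂ) • ((C α) ^ (n - cyc (τ * (τ⁻¹ * σ))) * ∏ k, (X (k, τ k) : MvPolynomial (Fin n × Fin n) ℂ)))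
          (fun q => ((sign q : ℤ) : ℂ) • ((C α) ^ (n - cyc (τ * q)) * ∏ k, (X (k, τ k) : MvPolynomial (Fin n × Fin n) ℂ)))
          (fun σ => rfl)]
        rw [hS, map_sum, Finset.sum_mul, Finset.smul_sum]
        refine Finset.sum_congr rfl fun σ _ => ?_
        rw [mul_inv_cancel_left]
        rw [map_mul, map_mul, map_pow]
        simp only [Equiv.Perm.sign_mul, Equiv.Perm.sign_inv]
        push_cast
        rw [mul_smul]
        congr 1
        rw [MvPolynomial.smul_eq_C_mul, mul_assoc]
    _ = C S * ∑ τ : Perm (Fin n), ((sign τ : ℤ) : ℂ) • ∏ k, (X (k, τ k) : MvPolynomial (Fin n × Fin n) ℂ) := by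
        rw [Finset.mul_sum]
        refine Finset.sum_congr rfl fun τ _ => ?_
        exact (mul_smul_comm _ _ _).symm
    _ = C (∏ j ∈ Finset.range (n - 1), (1 - ((j + 1 : ℕ) : ℂ) * α)) *
        (Matrix.of fun i j : Fin n => (X (i, j) : MvPolynomial (Fin n × Fin n) ℂ)).det := by
        rw [hS, scalar_id, range_shift]
        congr 1
        rw [← Matrix.det_transpose, Matrix.det_apply]
        refine Finset.sum_congr rfl fun τ _ => ?_
        simp only [Matrix.transpose_apply, Matrix.of_apply, Units.smul_def,
          ← Int.cast_smul_eq_zsmul (R := ℂ)]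


end Aux
end
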